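/- The set of extreme points of P₃ consists of exactly six tables: r₁ = (1/2)(δ₀₀₀ + δ₁₁₁), r₂ = (1/2)(δ₁₀₀ + δ₀₁₁), r₃ = (1/2)(δ₀₁₀ + δ₁₀₁), r₄ = (1/2)(δ₁₁₀ + δ₀₀₁), r₅ = (1/4)(δ₀₀₀ + δ₁₁₀ + δ₁₀₁ + δ₀₁₁), and r₆ = (1/4)(δ₁₀₀ + δ₀₁₀ + δ₀₀₁ + δ₁₁₁). -/

import Mathlib

/-- The set of `3`-dimensional binary probability tables with uniform margins. -/
def P3 : Set ((Fin 3 → Fin 2) → ℝ) :=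
  {p | (∀ α, 0 ≤ p α) ∧ (∑ α, p α = 1) ∧
    ∀ i : Fin 3,
      ∑ α ∈ Finset.univ.filter (fun α : Fin 3 → Fin 2 => α i = 0), p α = 1 / 2}

/-- Indicator function of the cell `c`. -/
def δ (c : Fin 3 → Fin 2) : (Fin 3 → Fin 2) → ℝ :=
  fun α => if α = c then 1 else 0

lemma cell_enum' (α : Fin 3 → Fin 2) : α = ![0,0,0] ∨ α = ![1,0,0] ∨ α = ![0,1,0] ∨ α = ![1,1,0] ∨ α = ![0,0,1] ∨ α = ![1,0,1] ∨ α = ![0,1,1] ∨ α = ![1,1,1] := by revert α; decide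

lemma sum_expand' (f : (Fin 3 → Fin 2) → ℝ) :
    ∑ α, f α = f ![0,0,0] + f ![1,0,0] + f ![0,1,0] + f ![1,1,0] + f ![0,0,1] + f ![1,0,1] + f ![0,1,1] + f ![1,1,1] := by
  rw [show (Finset.univ : Finset (Fin 3 → Fin 2)) =
    {![0,0,0], ![1,0,0], ![0,1,0], ![1,1,0], ![0,0,1], ![1,0,1], ![0,1,1], ![1,1,1]} from by decide]
  simp +decide [Finset.sum_insert, Finset.mem_insert]
  ring

lemma mem_P3_iff' (p : (Fin 3 → Fin 2) → ℝ) : p ∈ P3 ↔ (∀ α, 0 ≤ p α) ∧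
    (p ![0,0,0] + p ![1,0,0] + p ![0,1,0] + p ![1,1,0] + p ![0,0,1] + p ![1,0,1] + p ![0,1,1] + p ![1,1,1] = 1) ∧
    (p ![0,0,0] + p ![0,1,0] + p ![0,0,1] + p ![0,1,1] = 1 / 2) ∧
    (p ![0,0,0] + p ![1,0,0] + p ![0,0,1] + p ![1,0,1] = 1 / 2) ∧
    (p ![0,0,0] + p ![1,0,0] + p ![0,1,0] + p ![1,1,0] = 1 / 2) := by
  constructor
  · rintro ⟨h0, h1, h2⟩
    refine ⟨h0, by rw [← sum_expand']; exact h1, ?_, ?_, ?_⟩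
    · have := h2 0; rw [Finset.sum_filter, sum_expand'] at this; simpa +decide using this
    · have := h2 1; rw [Finset.sum_filter, sum_expand'] at this; simpa +decide using this
    · have := h2 2; rw [Finset.sum_filter, sum_expand'] at this; simpa +decide using this
  · rintro ⟨h0, h1, h2, h3, h4⟩
    refine ⟨h0, by rw [sum_expand']; exact h1, ?_⟩
    intro i
    fin_cases i
    · rw [Finset.sum_filter, sum_expand']; simpa +decide using h2
    · rw [Finset.sum_filter, sum_expand']; simpa +decide using h3
    · rw [Finset.sum_filter, sum_expand']; simpa +decide using h4

lemma rv00 : ((1 / 2 : ℝ) • (δ ![0,0,0] + δ ![1,1,1])) ![0,0,0] = 1 / 2 := by simp +decide [δ]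
lemma rv01 : ((1 / 2 : ℝ) • (δ ![0,0,0] + δ ![1,1,1])) ![1,0,0] = 0 := by simp +decide [δ]
lemma rv02 : ((1 / 2 : ℝ) • (δ ![0,0,0] + δ ![1,1,1])) ![0,1,0] = 0 := by simp +decide [δ]
lemma rv03 : ((1 / 2 : ℝ) • (δ ![0,0,0] + δ ![1,1,1])) ![1,1,0] = 0 := by simp +decide [δ]
lemma rv04 : ((1 / 2 : ℝ) • (δ ![0,0,0] + δ ![1,1,1])) ![0,0,1] = 0 := by simp +decide [δ]
lemma rv05 : ((1 / 2 : ℝ) • (δ ![0,0,0] + δ ![1,1,1])) ![1,0,1] = 0 := by simp +decide [δ]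
lemma rv06 : ((1 / 2 : ℝ) • (δ ![0,0,0] + δ ![1,1,1])) ![0,1,1] = 0 := by simp +decide [δ]
lemma rv07 : ((1 / 2 : ℝ) • (δ ![0,0,0] + δ ![1,1,1])) ![1,1,1] = 1 / 2 := by simp +decide [δ]
lemma rv10 : ((1 / 2 : ℝ) • (δ ![1,0,0] + δ ![0,1,1])) ![0,0,0] = 0 := by simp +decide [δ]
lemma rv11 : ((1 / 2 : ℝ) • (δ ![1,0,0] + δ ![0,1,1])) ![1,0,0] = 1 / 2 := by simp +decide [δ]
lemma rv12 : ((1 / 2 : ℝ) • (δ ![1,0,0] + δ ![0,1,1])) ![0,1,0] = 0 := by simp +decide [δ]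
lemma rv13 : ((1 / 2 : ℝ) • (δ ![1,0,0] + δ ![0,1,1])) ![1,1,0] = 0 := by simp +decide [δ]
lemma rv14 : ((1 / 2 : ℝ) • (δ ![1,0,0] + δ ![0,1,1])) ![0,0,1] = 0 := by simp +decide [δ]
lemma rv15 : ((1 / 2 : ℝ) • (δ ![1,0,0] + δ ![0,1,1])) ![1,0,1] = 0 := by simp +decide [δ]
lemma rv16 : ((1 / 2 : ℝ) • (δ ![1,0,0] + δ ![0,1,1])) ![0,1,1] = 1 / 2 := by simp +decide [δ]
lemma rv17 : ((1 / 2 : ℝ) • (δ ![1,0,0] + δ ![0,1,1])) ![1,1,1] = 0 := by simp +decide [δ]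
lemma rv20 : ((1 / 2 : ℝ) • (δ ![0,1,0] + δ ![1,0,1])) ![0,0,0] = 0 := by simp +decide [δ]
lemma rv21 : ((1 / 2 : ℝ) • (δ ![0,1,0] + δ ![1,0,1])) ![1,0,0] = 0 := by simp +decide [δ]
lemma rv22 : ((1 / 2 : ℝ) • (δ ![0,1,0] + δ ![1,0,1])) ![0,1,0] = 1 / 2 := by simp +decide [δ]
lemma rv23 : ((1 / 2 : ℝ) • (δ ![0,1,0] + δ ![1,0,1])) ![1,1,0] = 0 := by simp +decide [δ]
lemma rv24 : ((1 / 2 : ℝ) • (δ ![0,1,0] + δ ![1,0,1])) ![0,0,1] = 0 := by simp +decide [δ]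
lemma rv25 : ((1 / 2 : ℝ) • (δ ![0,1,0] + δ ![1,0,1])) ![1,0,1] = 1 / 2 := by simp +decide [δ]
lemma rv26 : ((1 / 2 : ℝ) • (δ ![0,1,0] + δ ![1,0,1])) ![0,1,1] = 0 := by simp +decide [δ]
lemma rv27 : ((1 / 2 : ℝ) • (δ ![0,1,0] + δ ![1,0,1])) ![1,1,1] = 0 := by simp +decide [δ]
lemma rv30 : ((1 / 2 : ℝ) • (δ ![1,1,0] + δ ![0,0,1])) ![0,0,0] = 0 := by simp +decide [δ]
lemma rv31 : ((1 / 2 : ℝ) • (δ ![1,1,0] + δ ![0,0,1])) ![1,0,0] = 0 := by simp +decide [δ]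
lemma rv32 : ((1 / 2 : ℝ) • (δ ![1,1,0] + δ ![0,0,1])) ![0,1,0] = 0 := by simp +decide [δ]
lemma rv33 : ((1 / 2 : ℝ) • (δ ![1,1,0] + δ ![0,0,1])) ![1,1,0] = 1 / 2 := by simp +decide [δ]
lemma rv34 : ((1 / 2 : ℝ) • (δ ![1,1,0] + δ ![0,0,1])) ![0,0,1] = 1 / 2 := by simp +decide [δ]
lemma rv35 : ((1 / 2 : ℝ) • (δ ![1,1,0] + δ ![0,0,1])) ![1,0,1] = 0 := by simp +decide [δ]
lemma rv36 : ((1 / 2 : ℝ) • (δ ![1,1,0] + δ ![0,0,1])) ![0,1,1] = 0 := by simp +decide [δ]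
lemma rv37 : ((1 / 2 : ℝ) • (δ ![1,1,0] + δ ![0,0,1])) ![1,1,1] = 0 := by simp +decide [δ]
lemma rv40 : ((1 / 4 : ℝ) • (δ ![0,0,0] + δ ![1,1,0] + δ ![1,0,1] + δ ![0,1,1])) ![0,0,0] = 1 / 4 := by simp +decide [δ]
lemma rv41 : ((1 / 4 : ℝ) • (δ ![0,0,0] + δ ![1,1,0] + δ ![1,0,1] + δ ![0,1,1])) ![1,0,0] = 0 := by simp +decide [δ]
lemma rv42 : ((1 / 4 : ℝ) • (δ ![0,0,0] + δ ![1,1,0] + δ ![1,0,1] + δ ![0,1,1])) ![0,1,0] = 0 := by simp +decide [δ]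
lemma rv43 : ((1 / 4 : ℝ) • (δ ![0,0,0] + δ ![1,1,0] + δ ![1,0,1] + δ ![0,1,1])) ![1,1,0] = 1 / 4 := by simp +decide [δ]
lemma rv44 : ((1 / 4 : ℝ) • (δ ![0,0,0] + δ ![1,1,0] + δ ![1,0,1] + δ ![0,1,1])) ![0,0,1] = 0 := by simp +decide [δ]
lemma rv45 : ((1 / 4 : ℝ) • (δ ![0,0,0] + δ ![1,1,0] + δ ![1,0,1] + δ ![0,1,1])) ![1,0,1] = 1 / 4 := by simp +decide [δ]
lemma rv46 : ((1 / 4 : ℝ) • (δ ![0,0,0] + δ ![1,1,0] + δ ![1,0,1] + δ ![0,1,1])) ![0,1,1] = 1 / 4 := by simp +decide [δ]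
lemma rv47 : ((1 / 4 : ℝ) • (δ ![0,0,0] + δ ![1,1,0] + δ ![1,0,1] + δ ![0,1,1])) ![1,1,1] = 0 := by simp +decide [δ]
lemma rv50 : ((1 / 4 : ℝ) • (δ ![1,0,0] + δ ![0,1,0] + δ ![0,0,1] + δ ![1,1,1])) ![0,0,0] = 0 := by simp +decide [δ]
lemma rv51 : ((1 / 4 : ℝ) • (δ ![1,0,0] + δ ![0,1,0] + δ ![0,0,1] + δ ![1,1,1])) ![1,0,0] = 1 / 4 := by simp +decide [δ]
lemma rv52 : ((1 / 4 : ℝ) • (δ ![1,0,0] + δ ![0,1,0] + δ ![0,0,1] + δ ![1,1,1])) ![0,1,0] = 1 / 4 := by simp +decide [δ]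
lemma rv53 : ((1 / 4 : ℝ) • (δ ![1,0,0] + δ ![0,1,0] + δ ![0,0,1] + δ ![1,1,1])) ![1,1,0] = 0 := by simp +decide [δ]
lemma rv54 : ((1 / 4 : ℝ) • (δ ![1,0,0] + δ ![0,1,0] + δ ![0,0,1] + δ ![1,1,1])) ![0,0,1] = 1 / 4 := by simp +decide [δ]
lemma rv55 : ((1 / 4 : ℝ) • (δ ![1,0,0] + δ ![0,1,0] + δ ![0,0,1] + δ ![1,1,1])) ![1,0,1] = 0 := by simp +decide [δ]
lemma rv56 : ((1 / 4 : ℝ) • (δ ![1,0,0] + δ ![0,1,0] + δ ![0,0,1] + δ ![1,1,1])) ![0,1,1] = 0 := by simp +decide [δ]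
lemma rv57 : ((1 / 4 : ℝ) • (δ ![1,0,0] + δ ![0,1,0] + δ ![0,0,1] + δ ![1,1,1])) ![1,1,1] = 1 / 4 := by simp +decide [δ]

lemma mem_r0 : ((1 / 2 : ℝ) • (δ ![0,0,0] + δ ![1,1,1])) ∈ P3 := by
  rw [mem_P3_iff']
  refine ⟨fun α => ?_, ?_, ?_, ?_, ?_⟩
  · simp only [Pi.smul_apply, Pi.add_apply, smul_eq_mul, δ]
    split_ifs <;> norm_num
  all_goals simp only [rv00, rv01, rv02, rv03, rv04, rv05, rv06, rv07]; norm_num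

lemma mem_r1 : ((1 / 2 : ℝ) • (δ ![1,0,0] + δ ![0,1,1])) ∈ P3 := by
  rw [mem_P3_iff']
  refine ⟨fun α => ?_, ?_, ?_, ?_, ?_⟩
  · simp only [Pi.smul_apply, Pi.add_apply, smul_eq_mul, δ]
    split_ifs <;> norm_num
  all_goals simp only [rv10, rv11, rv12, rv13, rv14, rv15, rv16, rv17]; norm_num

lemma mem_r2 : ((1 / 2 : ℝ) • (δ ![0,1,0] + δ ![1,0,1])) ∈ P3 := by
  rw [mem_P3_iff']
  refine ⟨fun α => ?_, ?_, ?_, ?_, ?_⟩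
  · simp only [Pi.smul_apply, Pi.add_apply, smul_eq_mul, δ]
    split_ifs <;> norm_num
  all_goals simp only [rv20, rv21, rv22, rv23, rv24, rv25, rv26, rv27]; norm_num

lemma mem_r3 : ((1 / 2 : ℝ) • (δ ![1,1,0] + δ ![0,0,1])) ∈ P3 := by
  rw [mem_P3_iff']
  refine ⟨fun α => ?_, ?_, ?_, ?_, ?_⟩
  · simp only [Pi.smul_apply, Pi.add_apply, smul_eq_mul, δ]
    split_ifs <;> norm_num
  all_goals simp only [rv30, rv31, rv32, rv33, rv34, rv35, rv36, rv37]; norm_num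

lemma mem_r4 : ((1 / 4 : ℝ) • (δ ![0,0,0] + δ ![1,1,0] + δ ![1,0,1] + δ ![0,1,1])) ∈ P3 := by
  rw [mem_P3_iff']
  refine ⟨fun α => ?_, ?_, ?_, ?_, ?_⟩
  · simp only [Pi.smul_apply, Pi.add_apply, smul_eq_mul, δ]
    split_ifs <;> norm_num
  all_goals simp only [rv40, rv41, rv42, rv43, rv44, rv45, rv46, rv47]; norm_num

lemma mem_r5 : ((1 / 4 : ℝ) • (δ ![1,0,0] + δ ![0,1,0] + δ ![0,0,1] + δ ![1,1,1])) ∈ P3 := by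
  rw [mem_P3_iff']
  refine ⟨fun α => ?_, ?_, ?_, ?_, ?_⟩
  · simp only [Pi.smul_apply, Pi.add_apply, smul_eq_mul, δ]
    split_ifs <;> norm_num
  all_goals simp only [rv50, rv51, rv52, rv53, rv54, rv55, rv56, rv57]; norm_num

lemma uniq_r0 (x : (Fin 3 → Fin 2) → ℝ) (hx : x ∈ P3) (z1 : x ![1,0,0] = 0) (z2 : x ![0,1,0] = 0) (z3 : x ![1,1,0] = 0) (z4 : x ![0,0,1] = 0) (z5 : x ![1,0,1] = 0) (z6 : x ![0,1,1] = 0) :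
    x = ((1 / 2 : ℝ) • (δ ![0,0,0] + δ ![1,1,1])) := by
  rw [mem_P3_iff'] at hx
  obtain ⟨h0, h1, h2, h3, h4⟩ := hx
  funext α
  rcases cell_enum' α with rfl | rfl | rfl | rfl | rfl | rfl | rfl | rfl
  · rw [rv00]; linarith
  · rw [rv01]; linarith
  · rw [rv02]; linarith
  · rw [rv03]; linarith
  · rw [rv04]; linarith
  · rw [rv05]; linarith
  · rw [rv06]; linarith
  · rw [rv07]; linarith

lemma uniq_r1 (x : (Fin 3 → Fin 2) → ℝ) (hx : x ∈ P3) (z0 : x ![0,0,0] = 0) (z2 : x ![0,1,0] = 0) (z3 : x ![1,1,0] = 0) (z4 : x ![0,0,1] = 0) (z5 : x ![1,0,1] = 0) (z7 : x ![1,1,1] = 0) :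
    x = ((1 / 2 : ℝ) • (δ ![1,0,0] + δ ![0,1,1])) := by
  rw [mem_P3_iff'] at hx
  obtain ⟨h0, h1, h2, h3, h4⟩ := hx
  funext α
  rcases cell_enum' α with rfl | rfl | rfl | rfl | rfl | rfl | rfl | rfl
  · rw [rv10]; linarith
  · rw [rv11]; linarith
  · rw [rv12]; linarith
  · rw [rv13]; linarith
  · rw [rv14]; linarith
  · rw [rv15]; linarith
  · rw [rv16]; linarith
  · rw [rv17]; linarith

lemma uniq_r2 (x : (Fin 3 → Fin 2) → ℝ) (hx : x ∈ P3) (z0 : x ![0,0,0] = 0) (z1 : x ![1,0,0] = 0) (z3 : x ![1,1,0] = 0) (z4 : x ![0,0,1] = 0) (z6 : x ![0,1,1] = 0) (z7 : x ![1,1,1] = 0) :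
    x = ((1 / 2 : ℝ) • (δ ![0,1,0] + δ ![1,0,1])) := by
  rw [mem_P3_iff'] at hx
  obtain ⟨h0, h1, h2, h3, h4⟩ := hx
  funext α
  rcases cell_enum' α with rfl | rfl | rfl | rfl | rfl | rfl | rfl | rfl
  · rw [rv20]; linarith
  · rw [rv21]; linarith
  · rw [rv22]; linarith
  · rw [rv23]; linarith
  · rw [rv24]; linarith
  · rw [rv25]; linarith
  · rw [rv26]; linarith
  · rw [rv27]; linarith

lemma uniq_r3 (x : (Fin 3 → Fin 2) → ℝ) (hx : x ∈ P3) (z0 : x ![0,0,0] = 0) (z1 : x ![1,0,0] = 0) (z2 : x ![0,1,0] = 0) (z5 : x ![1,0,1] = 0) (z6 : x ![0,1,1] = 0) (z7 : x ![1,1,1] = 0) :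
    x = ((1 / 2 : ℝ) • (δ ![1,1,0] + δ ![0,0,1])) := by
  rw [mem_P3_iff'] at hx
  obtain ⟨h0, h1, h2, h3, h4⟩ := hx
  funext α
  rcases cell_enum' α with rfl | rfl | rfl | rfl | rfl | rfl | rfl | rfl
  · rw [rv30]; linarith
  · rw [rv31]; linarith
  · rw [rv32]; linarith
  · rw [rv33]; linarith
  · rw [rv34]; linarith
  · rw [rv35]; linarith
  · rw [rv36]; linarith
  · rw [rv37]; linarith

lemma uniq_r4 (x : (Fin 3 → Fin 2) → ℝ) (hx : x ∈ P3) (z1 : x ![1,0,0] = 0) (z2 : x ![0,1,0] = 0) (z4 : x ![0,0,1] = 0) (z7 : x ![1,1,1] = 0) :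
    x = ((1 / 4 : ℝ) • (δ ![0,0,0] + δ ![1,1,0] + δ ![1,0,1] + δ ![0,1,1])) := by
  rw [mem_P3_iff'] at hx
  obtain ⟨h0, h1, h2, h3, h4⟩ := hx
  funext α
  rcases cell_enum' α with rfl | rfl | rfl | rfl | rfl | rfl | rfl | rfl
  · rw [rv40]; linarith
  · rw [rv41]; linarith
  · rw [rv42]; linarith
  · rw [rv43]; linarith
  · rw [rv44]; linarith
  · rw [rv45]; linarith
  · rw [rv46]; linarith
  · rw [rv47]; linarith

lemma uniq_r5 (x : (Fin 3 → Fin 2) → ℝ) (hx : x ∈ P3) (z0 : x ![0,0,0] = 0) (z3 : x ![1,1,0] = 0) (z5 : x ![1,0,1] = 0) (z6 : x ![0,1,1] = 0) :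
    x = ((1 / 4 : ℝ) • (δ ![1,0,0] + δ ![0,1,0] + δ ![0,0,1] + δ ![1,1,1])) := by
  rw [mem_P3_iff'] at hx
  obtain ⟨h0, h1, h2, h3, h4⟩ := hx
  funext α
  rcases cell_enum' α with rfl | rfl | rfl | rfl | rfl | rfl | rfl | rfl
  · rw [rv50]; linarith
  · rw [rv51]; linarith
  · rw [rv52]; linarith
  · rw [rv53]; linarith
  · rw [rv54]; linarith
  · rw [rv55]; linarith
  · rw [rv56]; linarith
  · rw [rv57]; linarith

lemma seg_zero' {x x₁ x₂ : (Fin 3 → Fin 2) → ℝ} (h₁ : ∀ α, 0 ≤ x₁ α) (h₂ : ∀ α, 0 ≤ x₂ α)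
    {a b : ℝ} (ha : 0 < a) (hb : 0 < b) (hsum : a • x₁ + b • x₂ = x)
    (c : Fin 3 → Fin 2) (hc : x c = 0) : x₁ c = 0 ∧ x₂ c = 0 := by
  have e := congrFun hsum c
  simp only [Pi.add_apply, Pi.smul_apply, smul_eq_mul] at e
  rw [hc] at e
  constructor
  · refine le_antisymm ?_ (h₁ c)
    nlinarith [mul_nonneg hb.le (h₂ c)]
  · refine le_antisymm ?_ (h₂ c)
    nlinarith [mul_nonneg ha.le (h₁ c)]

lemma extreme_r0 : ((1 / 2 : ℝ) • (δ ![0,0,0] + δ ![1,1,1])) ∈ Set.extremePoints ℝ P3 := by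
  refine ⟨mem_r0, ?_⟩
  rintro x₁ hx₁ x₂ hx₂ ⟨a, b, ha, hb, hab, hsum⟩
  obtain ⟨u1, v1⟩ := seg_zero' hx₁.1 hx₂.1 ha hb hsum ![1,0,0] (rv01)
  obtain ⟨u2, v2⟩ := seg_zero' hx₁.1 hx₂.1 ha hb hsum ![0,1,0] (rv02)
  obtain ⟨u3, v3⟩ := seg_zero' hx₁.1 hx₂.1 ha hb hsum ![1,1,0] (rv03)
  obtain ⟨u4, v4⟩ := seg_zero' hx₁.1 hx₂.1 ha hb hsum ![0,0,1] (rv04)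
  obtain ⟨u5, v5⟩ := seg_zero' hx₁.1 hx₂.1 ha hb hsum ![1,0,1] (rv05)
  obtain ⟨u6, v6⟩ := seg_zero' hx₁.1 hx₂.1 ha hb hsum ![0,1,1] (rv06)
  exact uniq_r0 x₁ hx₁ u1 u2 u3 u4 u5 u6

lemma extreme_r1 : ((1 / 2 : ℝ) • (δ ![1,0,0] + δ ![0,1,1])) ∈ Set.extremePoints ℝ P3 := by
  refine ⟨mem_r1, ?_⟩
  rintro x₁ hx₁ x₂ hx₂ ⟨a, b, ha, hb, hab, hsum⟩
  obtain ⟨u0, v0⟩ := seg_zero' hx₁.1 hx₂.1 ha hb hsum ![0,0,0] (rv10)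
  obtain ⟨u2, v2⟩ := seg_zero' hx₁.1 hx₂.1 ha hb hsum ![0,1,0] (rv12)
  obtain ⟨u3, v3⟩ := seg_zero' hx₁.1 hx₂.1 ha hb hsum ![1,1,0] (rv13)
  obtain ⟨u4, v4⟩ := seg_zero' hx₁.1 hx₂.1 ha hb hsum ![0,0,1] (rv14)
  obtain ⟨u5, v5⟩ := seg_zero' hx₁.1 hx₂.1 ha hb hsum ![1,0,1] (rv15)
  obtain ⟨u7, v7⟩ := seg_zero' hx₁.1 hx₂.1 ha hb hsum ![1,1,1] (rv17)
  exact uniq_r1 x₁ hx₁ u0 u2 u3 u4 u5 u7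

lemma extreme_r2 : ((1 / 2 : ℝ) • (δ ![0,1,0] + δ ![1,0,1])) ∈ Set.extremePoints ℝ P3 := by
  refine ⟨mem_r2, ?_⟩
  rintro x₁ hx₁ x₂ hx₂ ⟨a, b, ha, hb, hab, hsum⟩
  obtain ⟨u0, v0⟩ := seg_zero' hx₁.1 hx₂.1 ha hb hsum ![0,0,0] (rv20)
  obtain ⟨u1, v1⟩ := seg_zero' hx₁.1 hx₂.1 ha hb hsum ![1,0,0] (rv21)
  obtain ⟨u3, v3⟩ := seg_zero' hx₁.1 hx₂.1 ha hb hsum ![1,1,0] (rv23)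
  obtain ⟨u4, v4⟩ := seg_zero' hx₁.1 hx₂.1 ha hb hsum ![0,0,1] (rv24)
  obtain ⟨u6, v6⟩ := seg_zero' hx₁.1 hx₂.1 ha hb hsum ![0,1,1] (rv26)
  obtain ⟨u7, v7⟩ := seg_zero' hx₁.1 hx₂.1 ha hb hsum ![1,1,1] (rv27)
  exact uniq_r2 x₁ hx₁ u0 u1 u3 u4 u6 u7

lemma extreme_r3 : ((1 / 2 : ℝ) • (δ ![1,1,0] + δ ![0,0,1])) ∈ Set.extremePoints ℝ P3 := by
  refine ⟨mem_r3, ?_⟩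
  rintro x₁ hx₁ x₂ hx₂ ⟨a, b, ha, hb, hab, hsum⟩
  obtain ⟨u0, v0⟩ := seg_zero' hx₁.1 hx₂.1 ha hb hsum ![0,0,0] (rv30)
  obtain ⟨u1, v1⟩ := seg_zero' hx₁.1 hx₂.1 ha hb hsum ![1,0,0] (rv31)
  obtain ⟨u2, v2⟩ := seg_zero' hx₁.1 hx₂.1 ha hb hsum ![0,1,0] (rv32)
  obtain ⟨u5, v5⟩ := seg_zero' hx₁.1 hx₂.1 ha hb hsum ![1,0,1] (rv35)
  obtain ⟨u6, v6⟩ := seg_zero' hx₁.1 hx₂.1 ha hb hsum ![0,1,1] (rv36)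
  obtain ⟨u7, v7⟩ := seg_zero' hx₁.1 hx₂.1 ha hb hsum ![1,1,1] (rv37)
  exact uniq_r3 x₁ hx₁ u0 u1 u2 u5 u6 u7

lemma extreme_r4 : ((1 / 4 : ℝ) • (δ ![0,0,0] + δ ![1,1,0] + δ ![1,0,1] + δ ![0,1,1])) ∈ Set.extremePoints ℝ P3 := by
  refine ⟨mem_r4, ?_⟩
  rintro x₁ hx₁ x₂ hx₂ ⟨a, b, ha, hb, hab, hsum⟩
  obtain ⟨u1, v1⟩ := seg_zero' hx₁.1 hx₂.1 ha hb hsum ![1,0,0] (rv41)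
  obtain ⟨u2, v2⟩ := seg_zero' hx₁.1 hx₂.1 ha hb hsum ![0,1,0] (rv42)
  obtain ⟨u4, v4⟩ := seg_zero' hx₁.1 hx₂.1 ha hb hsum ![0,0,1] (rv44)
  obtain ⟨u7, v7⟩ := seg_zero' hx₁.1 hx₂.1 ha hb hsum ![1,1,1] (rv47)
  exact uniq_r4 x₁ hx₁ u1 u2 u4 u7

lemma extreme_r5 : ((1 / 4 : ℝ) • (δ ![1,0,0] + δ ![0,1,0] + δ ![0,0,1] + δ ![1,1,1])) ∈ Set.extremePoints ℝ P3 := by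
  refine ⟨mem_r5, ?_⟩
  rintro x₁ hx₁ x₂ hx₂ ⟨a, b, ha, hb, hab, hsum⟩
  obtain ⟨u0, v0⟩ := seg_zero' hx₁.1 hx₂.1 ha hb hsum ![0,0,0] (rv50)
  obtain ⟨u3, v3⟩ := seg_zero' hx₁.1 hx₂.1 ha hb hsum ![1,1,0] (rv53)
  obtain ⟨u5, v5⟩ := seg_zero' hx₁.1 hx₂.1 ha hb hsum ![1,0,1] (rv55)
  obtain ⟨u6, v6⟩ := seg_zero' hx₁.1 hx₂.1 ha hb hsum ![0,1,1] (rv56)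
  exact uniq_r5 x₁ hx₁ u0 u3 u5 u6

lemma P3_convex : Convex ℝ P3 := by
  intro x hx y hy a b ha hb hab
  rw [mem_P3_iff'] at hx hy ⊢
  obtain ⟨hx0, hx1, hx2, hx3, hx4⟩ := hx
  obtain ⟨hy0, hy1, hy2, hy3, hy4⟩ := hy
  refine ⟨fun α => ?_, ?_, ?_, ?_, ?_⟩
  · simp only [Pi.add_apply, Pi.smul_apply, smul_eq_mul]
    exact add_nonneg (mul_nonneg ha (hx0 α)) (mul_nonneg hb (hy0 α))
  all_goals simp only [Pi.add_apply, Pi.smul_apply, smul_eq_mul]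
  · linear_combination a * hx1 + b * hy1 + hab
  · linear_combination a * hx2 + b * hy2 + (1/2 : ℝ) * hab
  · linear_combination a * hx3 + b * hy3 + (1/2 : ℝ) * hab
  · linear_combination a * hx4 + b * hy4 + (1/2 : ℝ) * hab

set_option maxHeartbeats 1000000 in
lemma P3_subset_hull : P3 ⊆ convexHull ℝ ({((1 / 2 : ℝ) • (δ ![0,0,0] + δ ![1,1,1])), ((1 / 2 : ℝ) • (δ ![1,0,0] + δ ![0,1,1])), ((1 / 2 : ℝ) • (δ ![0,1,0] + δ ![1,0,1])), ((1 / 2 : ℝ) • (δ ![1,1,0] + δ ![0,0,1])), ((1 / 4 : ℝ) • (δ ![0,0,0] + δ ![1,1,0] + δ ![1,0,1] + δ ![0,1,1])), ((1 / 4 : ℝ) • (δ ![1,0,0] + δ ![0,1,0] + δ ![0,0,1] + δ ![1,1,1]))} : Set ((Fin 3 → Fin 2) → ℝ)) := by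
  intro p hp
  have hp' := (mem_P3_iff' p).1 hp
  obtain ⟨h0, h1, h2, h3, h4⟩ := hp'
  rcases le_total (p ![1,1,1]) (p ![0,0,0]) with hcase | hcase
  · have hrep : p = ∑ i : Fin 6, (![2 * p ![1,1,1], 2 * p ![1,0,0], 2 * p ![0,1,0], 2 * p ![0,0,1], 4 * (p ![0,0,0] - p ![1,1,1]), (0 : ℝ)] : Fin 6 → ℝ) i • (![((1 / 2 : ℝ) • (δ ![0,0,0] + δ ![1,1,1])), ((1 / 2 : ℝ) • (δ ![1,0,0] + δ ![0,1,1])), ((1 / 2 : ℝ) • (δ ![0,1,0] + δ ![1,0,1])), ((1 / 2 : ℝ) • (δ ![1,1,0] + δ ![0,0,1])), ((1 / 4 : ℝ) • (δ ![0,0,0] + δ ![1,1,0] + δ ![1,0,1] + δ ![0,1,1])), ((1 / 4 : ℝ) • (δ ![1,0,0] + δ ![0,1,0] + δ ![0,0,1] + δ ![1,1,1]))] : Fin 6 → ((Fin 3 → Fin 2) → ℝ)) i := by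
      funext α
      rcases cell_enum' α with rfl | rfl | rfl | rfl | rfl | rfl | rfl | rfl
      all_goals simp +decide [Fin.sum_univ_succ, Finset.sum_apply, δ]
      all_goals linarith
    rw [hrep]
    have hw : ∀ i ∈ (Finset.univ : Finset (Fin 6)), 0 ≤ (![2 * p ![1,1,1], 2 * p ![1,0,0], 2 * p ![0,1,0], 2 * p ![0,0,1], 4 * (p ![0,0,0] - p ![1,1,1]), (0 : ℝ)] : Fin 6 → ℝ) i := by
      intro i _
      fin_cases i
      · show (0:ℝ) ≤ 2 * p ![1,1,1]; linarith [h0 ![0,0,0], h0 ![1,0,0], h0 ![0,1,0], h0 ![1,1,0], h0 ![0,0,1], h0 ![1,0,1], h0 ![0,1,1], h0 ![1,1,1]]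
      · show (0:ℝ) ≤ 2 * p ![1,0,0]; linarith [h0 ![0,0,0], h0 ![1,0,0], h0 ![0,1,0], h0 ![1,1,0], h0 ![0,0,1], h0 ![1,0,1], h0 ![0,1,1], h0 ![1,1,1]]
      · show (0:ℝ) ≤ 2 * p ![0,1,0]; linarith [h0 ![0,0,0], h0 ![1,0,0], h0 ![0,1,0], h0 ![1,1,0], h0 ![0,0,1], h0 ![1,0,1], h0 ![0,1,1], h0 ![1,1,1]]
      · show (0:ℝ) ≤ 2 * p ![0,0,1]; linarith [h0 ![0,0,0], h0 ![1,0,0], h0 ![0,1,0], h0 ![1,1,0], h0 ![0,0,1], h0 ![1,0,1], h0 ![0,1,1], h0 ![1,1,1]]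
      · show (0:ℝ) ≤ 4 * (p ![0,0,0] - p ![1,1,1]); linarith [h0 ![0,0,0], h0 ![1,0,0], h0 ![0,1,0], h0 ![1,1,0], h0 ![0,0,1], h0 ![1,0,1], h0 ![0,1,1], h0 ![1,1,1]]
      · exact le_rfl
    have hws : ∑ i : Fin 6, (![2 * p ![1,1,1], 2 * p ![1,0,0], 2 * p ![0,1,0], 2 * p ![0,0,1], 4 * (p ![0,0,0] - p ![1,1,1]), (0 : ℝ)] : Fin 6 → ℝ) i = 1 := by
      simp [Fin.sum_univ_succ]; linarith
    have hz : ∀ i ∈ (Finset.univ : Finset (Fin 6)),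
        (![((1 / 2 : ℝ) • (δ ![0,0,0] + δ ![1,1,1])), ((1 / 2 : ℝ) • (δ ![1,0,0] + δ ![0,1,1])), ((1 / 2 : ℝ) • (δ ![0,1,0] + δ ![1,0,1])), ((1 / 2 : ℝ) • (δ ![1,1,0] + δ ![0,0,1])), ((1 / 4 : ℝ) • (δ ![0,0,0] + δ ![1,1,0] + δ ![1,0,1] + δ ![0,1,1])), ((1 / 4 : ℝ) • (δ ![1,0,0] + δ ![0,1,0] + δ ![0,0,1] + δ ![1,1,1]))] : Fin 6 → ((Fin 3 → Fin 2) → ℝ)) i ∈ ({((1 / 2 : ℝ) • (δ ![0,0,0] + δ ![1,1,1])), ((1 / 2 : ℝ) • (δ ![1,0,0] + δ ![0,1,1])), ((1 / 2 : ℝ) • (δ ![0,1,0] + δ ![1,0,1])), ((1 / 2 : ℝ) • (δ ![1,1,0] + δ ![0,0,1])), ((1 / 4 : ℝ) • (δ ![0,0,0] + δ ![1,1,0] + δ ![1,0,1] + δ ![0,1,1])), ((1 / 4 : ℝ) • (δ ![1,0,0] + δ ![0,1,0] + δ ![0,0,1] + δ ![1,1,1]))} : Set ((Fin 3 → Fin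 2) → ℝ)) := by
      intro i _
      fin_cases i
      all_goals simp only [Set.mem_insert_iff, Set.mem_singleton_iff]
      · left; rfl
      · right; left; rfl
      · right; right; left; rfl
      · right; right; right; left; rfl
      · right; right; right; right; left; rfl
      · right; right; right; right; right; exact rfl
    exact (convex_convexHull ℝ ({((1 / 2 : ℝ) • (δ ![0,0,0] + δ ![1,1,1])), ((1 / 2 : ℝ) • (δ ![1,0,0] + δ ![0,1,1])), ((1 / 2 : ℝ) • (δ ![0,1,0] + δ ![1,0,1])), ((1 / 2 : ℝ) • (δ ![1,1,0] + δ ![0,0,1])), ((1 / 4 : ℝ) • (δ ![0,0,0] + δ ![1,1,0] + δ ![1,0,1] + δ ![0,1,1])), ((1 / 4 : ℝ) • (δ ![1,0,0] + δ ![0,1,0] + δ ![0,0,1] + δ ![1,1,1]))} : Set ((Fin 3 → Fin 2) → ℝ))).sum_mem hw hws (fun i hi => subset_convexHull ℝ _ (hz i hi))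

  · have hrep : p = ∑ i : Fin 6, (![2 * p ![0,0,0], 2 * p ![0,1,1], 2 * p ![1,0,1], 2 * p ![1,1,0], (0 : ℝ), 4 * (p ![1,1,1] - p ![0,0,0])] : Fin 6 → ℝ) i • (![((1 / 2 : ℝ) • (δ ![0,0,0] + δ ![1,1,1])), ((1 / 2 : ℝ) • (δ ![1,0,0] + δ ![0,1,1])), ((1 / 2 : ℝ) • (δ ![0,1,0] + δ ![1,0,1])), ((1 / 2 : ℝ) • (δ ![1,1,0] + δ ![0,0,1])), ((1 / 4 : ℝ) • (δ ![0,0,0] + δ ![1,1,0] + δ ![1,0,1] + δ ![0,1,1])), ((1 / 4 : ℝ) • (δ ![1,0,0] + δ ![0,1,0] + δ ![0,0,1] + δ ![1,1,1]))] : Fin 6 → ((Fin 3 → Fin 2) → ℝ)) i := by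
      funext α
      rcases cell_enum' α with rfl | rfl | rfl | rfl | rfl | rfl | rfl | rfl
      all_goals simp +decide [Fin.sum_univ_succ, Finset.sum_apply, δ]
      all_goals linarith
    rw [hrep]
    have hw : ∀ i ∈ (Finset.univ : Finset (Fin 6)), 0 ≤ (![2 * p ![0,0,0], 2 * p ![0,1,1], 2 * p ![1,0,1], 2 * p ![1,1,0], (0 : ℝ), 4 * (p ![1,1,1] - p ![0,0,0])] : Fin 6 → ℝ) i := by
      intro i _
      fin_cases i
      · show (0:ℝ) ≤ 2 * p ![0,0,0]; linarith [h0 ![0,0,0], h0 ![1,0,0], h0 ![0,1,0], h0 ![1,1,0], h0 ![0,0,1], h0 ![1,0,1], h0 ![0,1,1], h0 ![1,1,1]]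
      · show (0:ℝ) ≤ 2 * p ![0,1,1]; linarith [h0 ![0,0,0], h0 ![1,0,0], h0 ![0,1,0], h0 ![1,1,0], h0 ![0,0,1], h0 ![1,0,1], h0 ![0,1,1], h0 ![1,1,1]]
      · show (0:ℝ) ≤ 2 * p ![1,0,1]; linarith [h0 ![0,0,0], h0 ![1,0,0], h0 ![0,1,0], h0 ![1,1,0], h0 ![0,0,1], h0 ![1,0,1], h0 ![0,1,1], h0 ![1,1,1]]
      · show (0:ℝ) ≤ 2 * p ![1,1,0]; linarith [h0 ![0,0,0], h0 ![1,0,0], h0 ![0,1,0], h0 ![1,1,0], h0 ![0,0,1], h0 ![1,0,1], h0 ![0,1,1], h0 ![1,1,1]]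
      · exact le_rfl
      · show (0:ℝ) ≤ 4 * (p ![1,1,1] - p ![0,0,0]); linarith [h0 ![0,0,0], h0 ![1,0,0], h0 ![0,1,0], h0 ![1,1,0], h0 ![0,0,1], h0 ![1,0,1], h0 ![0,1,1], h0 ![1,1,1]]
    have hws : ∑ i : Fin 6, (![2 * p ![0,0,0], 2 * p ![0,1,1], 2 * p ![1,0,1], 2 * p ![1,1,0], (0 : ℝ), 4 * (p ![1,1,1] - p ![0,0,0])] : Fin 6 → ℝ) i = 1 := by
      simp [Fin.sum_univ_succ]; linarith
    have hz : ∀ i ∈ (Finset.univ : Finset (Fin 6)),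
        (![((1 / 2 : ℝ) • (δ ![0,0,0] + δ ![1,1,1])), ((1 / 2 : ℝ) • (δ ![1,0,0] + δ ![0,1,1])), ((1 / 2 : ℝ) • (δ ![0,1,0] + δ ![1,0,1])), ((1 / 2 : ℝ) • (δ ![1,1,0] + δ ![0,0,1])), ((1 / 4 : ℝ) • (δ ![0,0,0] + δ ![1,1,0] + δ ![1,0,1] + δ ![0,1,1])), ((1 / 4 : ℝ) • (δ ![1,0,0] + δ ![0,1,0] + δ ![0,0,1] + δ ![1,1,1]))] : Fin 6 → ((Fin 3 → Fin 2) → ℝ)) i ∈ ({((1 / 2 : ℝ) • (δ ![0,0,0] + δ ![1,1,1])), ((1 / 2 : ℝ) • (δ ![1,0,0] + δ ![0,1,1])), ((1 / 2 : ℝ) • (δ ![0,1,0] + δ ![1,0,1])), ((1 / 2 : ℝ) • (δ ![1,1,0] + δ ![0,0,1])), ((1 / 4 : ℝ) • (δ ![0,0,0] + δ ![1,1,0] + δ ![1,0,1] + δ ![0,1,1])), ((1 / 4 : ℝ) • (δ ![1,0,0] + δ ![0,1,0] + δ ![0,0,1] + δ ![1,1,1]))} : Set ((Fin 3 → Fin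 2) → ℝ)) := by
      intro i _
      fin_cases i
      all_goals simp only [Set.mem_insert_iff, Set.mem_singleton_iff]
      · left; rfl
      · right; left; rfl
      · right; right; left; rfl
      · right; right; right; left; rfl
      · right; right; right; right; left; rfl
      · right; right; right; right; right; exact rfl
    exact (convex_convexHull ℝ ({((1 / 2 : ℝ) • (δ ![0,0,0] + δ ![1,1,1])), ((1 / 2 : ℝ) • (δ ![1,0,0] + δ ![0,1,1])), ((1 / 2 : ℝ) • (δ ![0,1,0] + δ ![1,0,1])), ((1 / 2 : ℝ) • (δ ![1,1,0] + δ ![0,0,1])), ((1 / 4 : ℝ) • (δ ![0,0,0] + δ ![1,1,0] + δ ![1,0,1] + δ ![0,1,1])), ((1 / 4 : ℝ) • (δ ![1,0,0] + δ ![0,1,0] + δ ![0,0,1] + δ ![1,1,1]))} : Set ((Fin 3 → Fin 2) → ℝ))).sum_mem hw hws (fun i hi => subset_convexHull ℝ _ (hz i hi))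


/-- The extreme points of `P₃` are exactly the six tables
`r₁, …, r₆`. -/
theorem stmt_12 :
    Set.extremePoints ℝ P3 =
      {(1 / 2 : ℝ) • (δ ![0, 0, 0] + δ ![1, 1, 1]),
       (1 / 2 : ℝ) • (δ ![1, 0, 0] + δ ![0, 1, 1]),
       (1 / 2 : ℝ) • (δ ![0, 1, 0] + δ ![1, 0, 1]),
       (1 / 2 : ℝ) • (δ ![1, 1, 0] + δ ![0, 0, 1]),
       (1 / 4 : ℝ) • (δ ![0, 0, 0] + δ ![1, 1, 0] + δ ![1, 0, 1] + δ ![0, 1, 1]),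
       (1 / 4 : ℝ) • (δ ![1, 0, 0] + δ ![0, 1, 0] + δ ![0, 0, 1] + δ ![1, 1, 1])} := by
  have hull_eq : convexHull ℝ ({((1 / 2 : ℝ) • (δ ![0,0,0] + δ ![1,1,1])), ((1 / 2 : ℝ) • (δ ![1,0,0] + δ ![0,1,1])), ((1 / 2 : ℝ) • (δ ![0,1,0] + δ ![1,0,1])), ((1 / 2 : ℝ) • (δ ![1,1,0] + δ ![0,0,1])), ((1 / 4 : ℝ) • (δ ![0,0,0] + δ ![1,1,0] + δ ![1,0,1] + δ ![0,1,1])), ((1 / 4 : ℝ) • (δ ![1,0,0] + δ ![0,1,0] + δ ![0,0,1] + δ ![1,1,1]))} : Set ((Fin 3 → Fin 2) → ℝ)) = P3 := by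
    apply subset_antisymm
    · apply convexHull_min ?_ P3_convex
      intro y hy
      rcases hy with rfl | rfl | rfl | rfl | rfl | rfl
      · exact mem_r0
      · exact mem_r1
      · exact mem_r2
      · exact mem_r3
      · exact mem_r4
      · exact mem_r5
    · exact P3_subset_hull
  apply subset_antisymm
  · intro x hx
    rw [← hull_eq] at hx
    exact extremePoints_convexHull_subset hx
  · intro x hx
    rcases hx with rfl | rfl | rfl | rfl | rfl | rfl
    · exact extreme_r0
    · exact extreme_r1
    · exact extreme_r2
    · exact extreme_r3
    · exact extreme_r4
    · exact extreme_r5
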